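/- In the ILT model, the Wiener index satisfies the recurrence W(G_{t+1}) = 4·W(G_t) + e_t + n_t, where e_t and n_t are the numbers of edges and nodes of G_t. -/

import Mathlib

open SimpleGraph Finset

universe u
variable {V : Type u}

/-- One step of the Iterated Local Transitivity model: every vertex `x` gets a
clone `Sum.inr x` joined to `x` and all of its neighbours; old vertices are `Sum.inl`. -/
def ILTstep (G : SimpleGraph V) : SimpleGraph (V ⊕ V) where
  Adj a b := match a, b with
    | Sum.inl x, Sum.inl y => G.Adj x y
    | Sum.inl x, Sum.inr y => x = y ∨ G.Adj x y
    | Sum.inr x, Sum.inl y => x = y ∨ G.Adj x y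
    | Sum.inr _, Sum.inr _ => False
  symm := by
    refine ⟨?_⟩
    rintro (x | x) (y | y) h
    · exact G.adj_symm h
    · exact h.imp Eq.symm (fun hh => G.adj_symm hh)
    · exact h.imp Eq.symm (fun hh => G.adj_symm hh)
    · exact h.elim
  loopless := by
    refine ⟨?_⟩
    rintro (x | x) h
    · exact G.irrefl h
    · exact h

instance ILTstepDecAdj (G : SimpleGraph V) [DecidableEq V] [DecidableRel G.Adj] :
    DecidableRel (ILTstep G).Adj := fun a b =>
  match a, b with
  | Sum.inl x, Sum.inl y => inferInstanceAs (Decidable (G.Adj x y))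
  | Sum.inl x, Sum.inr y => inferInstanceAs (Decidable (x = y ∨ G.Adj x y))
  | Sum.inr x, Sum.inl y => inferInstanceAs (Decidable (x = y ∨ G.Adj x y))
  | Sum.inr _, Sum.inr _ => inferInstanceAs (Decidable False)

/-- The vertex set of the ILT model at time `t`. -/
def ILTV (V : Type u) : ℕ → Type u
  | 0 => V
  | t + 1 => ILTV V t ⊕ ILTV V t

/-- The graph of the ILT model at time `t`, starting from `G`. -/
def ILTG (G : SimpleGraph V) : (t : ℕ) → SimpleGraph (ILTV V t)
  | 0 => G
  | t + 1 => ILTstep (ILTG G t)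

instance ILTVFintype [Fintype V] : ∀ t, Fintype (ILTV V t)
  | 0 => inferInstanceAs (Fintype V)
  | t + 1 => letI := ILTVFintype t
             inferInstanceAs (Fintype (ILTV V t ⊕ ILTV V t))

instance ILTVDecEq [DecidableEq V] : ∀ t, DecidableEq (ILTV V t)
  | 0 => inferInstanceAs (DecidableEq V)
  | t + 1 => letI := ILTVDecEq t
             inferInstanceAs (DecidableEq (ILTV V t ⊕ ILTV V t))

instance ILTGDecAdj (G : SimpleGraph V) [DecidableEq V] [DecidableRel G.Adj] :
    ∀ t, DecidableRel (ILTG G t).Adj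
  | 0 => inferInstanceAs (DecidableRel G.Adj)
  | t + 1 => letI : DecidableEq (ILTV V t) := ILTVDecEq t
             letI : DecidableRel (ILTG G t).Adj := ILTGDecAdj G t
             ILTstepDecAdj (ILTG G t)

/-- The volume of a graph: the sum of the degrees of its vertices. -/
def graphVol [Fintype V] (G : SimpleGraph V) [DecidableRel G.Adj] : ℕ :=
  ∑ v, G.degree v

/-- The Wiener index: the sum of distances over unordered pairs of vertices. -/
noncomputable def wienerIndex [Fintype V] (G : SimpleGraph V) : ℕ :=
  (∑ x : V, ∑ y : V, G.dist x y) / 2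

/-!
Collapsing every clone `x'` onto `x` maps edges of `G_{t+1}` to edges or loops of `G_t`, so it
does not increase distances. Explicit walks then show that `d(x, y)` is preserved between
originals, while between an original and a clone, or between two clones, it grows by one exactly
when `x = y`, respectively when `x ~ y`. Summed over ordered pairs, the four blocks give
`4 ∑ d + 2n + 2e`, and the ordered sum of distances is twice the Wiener index.
-/

theorem Finset.even_sum_sum_of_symm {α : Type*} [Fintype α] (f : α → α → ℕ)
    (hsymm : ∀ x y, f x y = f y x) (hdiag : ∀ x, f x x = 0) :
    Even (∑ x, ∑ y, f x y) := by
  rw [Nat.even_iff, ← Nat.dvd_iff_mod_eq_zero, ← ZMod.natCast_eq_zero_iff]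
  push_cast
  rw [← Finset.sum_product']
  refine Finset.sum_ninvolution Prod.swap (fun p => ?_) (fun p hp hswap => hp ?_)
    (fun _ => mem_univ _) Prod.swap_swap
  · rw [Prod.fst_swap, Prod.snd_swap, hsymm]
    exact CharTwo.add_self_eq_zero _
  · obtain ⟨x, y⟩ := p
    obtain rfl : y = x := congrArg Prod.fst hswap
    simp [hdiag]

theorem two_mul_wienerIndex [Fintype V] (G : SimpleGraph V) :
    2 * wienerIndex G = ∑ x, ∑ y, G.dist x y :=
  Nat.two_mul_div_two_of_even <|
    Finset.even_sum_sum_of_symm _ (fun _ _ => dist_comm) (fun _ => dist_self)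

namespace SimpleGraph

variable {W : Type*} {G : SimpleGraph V} {H : SimpleGraph W}

theorem Walk.dist_apply_le_length (hG : G.Connected) {f : W → V}
    (hf : ∀ a b, H.Adj a b → f a = f b ∨ G.Adj (f a) (f b)) {a b : W} (p : H.Walk a b) :
    G.dist (f a) (f b) ≤ p.length := by
  induction p with
  | nil => simp
  | @cons a b c hab _ ih =>
    have hstep : G.dist (f a) (f b) ≤ 1 := by
      rcases hf a b hab with h | h
      · simp [h]
      · exact (dist_eq_one_iff_adj.mpr h).le
    have := hG.dist_triangle (u := f a) (v := f b) (w := f c)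
    rw [Walk.length_cons]
    omega

theorem Reachable.dist_apply_le_dist (hG : G.Connected) {f : W → V}
    (hf : ∀ a b, H.Adj a b → f a = f b ∨ G.Adj (f a) (f b)) {a b : W} (h : H.Reachable a b) :
    G.dist (f a) (f b) ≤ H.dist a b := by
  obtain ⟨p, hp⟩ := h.exists_walk_length_eq_dist
  exact hp ▸ p.dist_apply_le_length hG hf

theorem Reachable.exists_adj_dist_add_one_le {x y : V} (h : G.Reachable x y) (hxy : x ≠ y) :
    ∃ z, G.Adj x z ∧ G.dist z y + 1 ≤ G.dist x y := by
  obtain ⟨p, hp⟩ := h.exists_walk_length_eq_dist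
  cases p with
  | nil => exact absurd rfl hxy
  | @cons _ z _ hxz q => exact ⟨z, hxz, hp ▸ Nat.succ_le_succ (dist_le q)⟩

end SimpleGraph

namespace ILTstep

variable {G : SimpleGraph V}

@[simp] theorem adj_inl_inr {x y : V} : (ILTstep G).Adj (.inl x) (.inr y) ↔ x = y ∨ G.Adj x y :=
  .rfl
@[simp] theorem adj_inr_inl {x y : V} : (ILTstep G).Adj (.inr x) (.inl y) ↔ x = y ∨ G.Adj x y :=
  .rfl
@[simp] theorem not_adj_inr_inr {x y : V} : ¬(ILTstep G).Adj (.inr x) (.inr y) := id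

variable (G) in
def inlHom : G →g ILTstep G where
  toFun := Sum.inl
  map_rel' h := h

def collapse : V ⊕ V → V := Sum.elim id id

theorem collapse_eq_or_adj_of_adj {a b : V ⊕ V} (h : (ILTstep G).Adj a b) :
    collapse a = collapse b ∨ G.Adj (collapse a) (collapse b) := by
  rcases a with x | x <;> rcases b with y | y
  · exact .inr h
  · exact h
  · exact h
  · exact h.elim

theorem reachable_inl_inl (hG : G.Connected) (x y : V) :
    (ILTstep G).Reachable (.inl x) (.inl y) :=
  (hG.preconnected x y).map (inlHom G)

theorem reachable_inr_inl (x : V) : (ILTstep G).Reachable (.inr x) (.inl x) :=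
  Adj.reachable (adj_inr_inl.mpr (.inl rfl))

theorem connected (hG : G.Connected) : (ILTstep G).Connected := by
  have : Nonempty (V ⊕ V) := ⟨.inl hG.nonempty.some⟩
  have hinl : ∀ a : V ⊕ V, (ILTstep G).Reachable a (.inl (collapse a)) := by
    rintro (x | x)
    · rfl
    · exact reachable_inr_inl x
  exact .mk fun a b =>
    ((hinl a).trans (reachable_inl_inl hG _ _)).trans (hinl b).symm

theorem dist_collapse_le (hG : G.Connected) (a b : V ⊕ V) :
    G.dist (collapse a) (collapse b) ≤ (ILTstep G).dist a b :=
  ((connected hG).preconnected a b).dist_apply_le_dist hG fun _ _ => collapse_eq_or_adj_of_adj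

theorem dist_inl_inl (hG : G.Connected) (x y : V) :
    (ILTstep G).dist (.inl x) (.inl y) = G.dist x y := by
  refine le_antisymm ?_ (dist_collapse_le hG (.inl x) (.inl y))
  obtain ⟨p, hp⟩ := hG.exists_walk_length_eq_dist x y
  exact (dist_le (p.map (inlHom G))).trans (by rw [Walk.length_map, hp])

theorem dist_inr_inl [DecidableEq V] (hG : G.Connected) (x y : V) :
    (ILTstep G).dist (.inr x) (.inl y) = G.dist x y + if x = y then 1 else 0 := by
  by_cases hxy : x = y
  · subst hxy
    simp [dist_eq_one_iff_adj]
  rw [if_neg hxy, add_zero]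
  refine le_antisymm ?_ (dist_collapse_le hG (.inr x) (.inl y))
  obtain ⟨z, hxz, hzy⟩ := (hG.preconnected x y).exists_adj_dist_add_one_le hxy
  calc (ILTstep G).dist (.inr x) (.inl y)
      ≤ (ILTstep G).dist (.inr x) (.inl z) + (ILTstep G).dist (.inl z) (.inl y) :=
        (connected hG).dist_triangle
    _ = 1 + G.dist z y := by
        rw [dist_eq_one_iff_adj.mpr (adj_inr_inl.mpr (.inr hxz)), dist_inl_inl hG]
    _ ≤ G.dist x y := by omega

theorem dist_inl_inr [DecidableEq V] (hG : G.Connected) (x y : V) :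
    (ILTstep G).dist (.inl x) (.inr y) = G.dist x y + if x = y then 1 else 0 := by
  rw [dist_comm, dist_inr_inl hG, dist_comm]
  simp only [eq_comm]

theorem dist_inr_inr [DecidableRel G.Adj] (hG : G.Connected) (x y : V) :
    (ILTstep G).dist (.inr x) (.inr y) = G.dist x y + if G.Adj x y then 1 else 0 := by
  classical
  by_cases hxy : x = y
  · subst hxy
    simp
  by_cases hadj : G.Adj x y
  · have hne : (.inr x : V ⊕ V) ≠ .inr y := Sum.inr_injective.ne hxy
    have hlow := (connected hG).one_lt_dist_of_ne_of_not_adj hne not_adj_inr_inr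
    have hup : (ILTstep G).dist (.inr x) (.inr y) ≤ 2 :=
      dist_le ((Walk.nil.cons (adj_inl_inr.mpr (.inl rfl))).cons (adj_inr_inl.mpr (.inr hadj)))
    rw [if_pos hadj, dist_eq_one_iff_adj.mpr hadj]
    omega
  rw [if_neg hadj, add_zero]
  refine le_antisymm ?_ (dist_collapse_le hG (.inr x) (.inr y))
  obtain ⟨z, hxz, hzy⟩ := (hG.preconnected x y).exists_adj_dist_add_one_le hxy
  have hzy' : z ≠ y := by
    rintro rfl
    exact hadj hxz
  calc (ILTstep G).dist (.inr x) (.inr y)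
      ≤ (ILTstep G).dist (.inr x) (.inl z) + (ILTstep G).dist (.inl z) (.inr y) :=
        (connected hG).dist_triangle
    _ = 1 + G.dist z y := by
        rw [dist_eq_one_iff_adj.mpr (adj_inr_inl.mpr (.inr hxz)), dist_inl_inr hG, if_neg hzy',
          add_zero]
    _ ≤ G.dist x y := by omega

theorem sum_sum_dist [Fintype V] [DecidableEq V] [DecidableRel G.Adj] (hG : G.Connected) :
    ∑ a, ∑ b, (ILTstep G).dist a b
      = 4 * ∑ x, ∑ y, G.dist x y + 2 * #G.edgeFinset + 2 * Fintype.card V := by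
  have hdeg (x : V) : ∑ y, (if G.Adj x y then 1 else 0) = G.degree x := by
    simpa using (G.degree_eq_sum_if_adj (R := ℕ) x).symm
  simp only [Fintype.sum_sum_type, dist_inl_inl hG, dist_inl_inr hG, dist_inr_inl hG,
    dist_inr_inr hG, sum_add_distrib, sum_ite_eq, mem_univ, if_true, hdeg,
    G.sum_degrees_eq_twice_card_edges, sum_const, card_univ, smul_eq_mul, mul_one]
  ring

end ILTstep

theorem ILT_wiener_recurrence [Fintype V] [DecidableEq V]
    (G : SimpleGraph V) [DecidableRel G.Adj] (hG : G.Connected) :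
    wienerIndex (ILTstep G) = 4 * wienerIndex G + G.edgeFinset.card + Fintype.card V := by
  have hstep := two_mul_wienerIndex (ILTstep G)
  rw [ILTstep.sum_sum_dist hG, ← two_mul_wienerIndex G] at hstep
  omega
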